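/- The order ≺ on finite binary trees defined recursively (• ≺ t₁t₂ always; t₁t₂ ≺ t₁'t₂' iff t₁ ≺ t₁', or t₁ = t₁' and t₂ ≺ t₂') coincides with the reverse lexicographic comparison of the finite sequences Dyad(t): t ≺ t' iff the increasing enumeration of Dyad(t) is lexicographically greater than that of Dyad(t'). -/

import Mathlib

/-- Finite binary trees. -/
inductive PTree
  | leaf : PTree
  | node : PTree → PTree → PTree
deriving DecidableEq

/-- The recursive order on trees: `• ≺ t₁t₂` always holds, and
`t₁t₂ ≺ t₁'t₂'` iff `t₁ ≺ t₁'`, or `t₁ = t₁'` and `t₂ ≺ t₂'`. -/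
inductive TLt : PTree → PTree → Prop
  | leaf {t₁ t₂ : PTree} : TLt .leaf (.node t₁ t₂)
  | left {t₁ t₁' t₂ t₂' : PTree} : TLt t₁ t₁' → TLt (.node t₁ t₂) (.node t₁' t₂')
  | right {t₁ t₂ t₂' : PTree} : TLt t₂ t₂' → TLt (.node t₁ t₂) (.node t₁ t₂')

/-- `Dyad(•) = {0,1}`, `Dyad(t₁t₂) = (1/2)Dyad(t₁) ∪ (1/2 + (1/2)Dyad(t₂))`. -/
def PTree.dyad : PTree → Finset ℚ
  | .leaf => {0, 1}
  | .node t₁ t₂ =>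
      (t₁.dyad.image (fun x => x / 2)) ∪ (t₂.dyad.image (fun x => 1 / 2 + x / 2))

/-- The increasing enumeration of `Dyad(t)`. -/
def dyadList (t : PTree) : List ℚ := t.dyad.sort (· ≤ ·)

/- ### Auxiliary lemmas -/

lemma dyad_nonneg {t : PTree} {x : ℚ} (hx : x ∈ t.dyad) : 0 ≤ x := by
  induction t generalizing x with
  | leaf => simp [PTree.dyad] at hx; rcases hx with rfl | rfl <;> norm_num
  | node t₁ t₂ ih₁ ih₂ =>
    simp [PTree.dyad] at hx
    rcases hx with ⟨y, hy, rfl⟩ | ⟨y, hy, rfl⟩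
    · have := ih₁ hy; linarith
    · have := ih₂ hy; linarith

lemma dyad_le_one {t : PTree} {x : ℚ} (hx : x ∈ t.dyad) : x ≤ 1 := by
  induction t generalizing x with
  | leaf => simp [PTree.dyad] at hx; rcases hx with rfl | rfl <;> norm_num
  | node t₁ t₂ ih₁ ih₂ =>
    simp [PTree.dyad] at hx
    rcases hx with ⟨y, hy, rfl⟩ | ⟨y, hy, rfl⟩
    · have := ih₁ hy; linarith
    · have := ih₂ hy; linarith

lemma zero_mem_dyad (t : PTree) : (0 : ℚ) ∈ t.dyad := by
  induction t with
  | leaf => simp [PTree.dyad]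
  | node t₁ t₂ ih₁ ih₂ =>
    exact Finset.mem_union_left _ (Finset.mem_image.mpr ⟨0, ih₁, by norm_num⟩)

lemma one_mem_dyad (t : PTree) : (1 : ℚ) ∈ t.dyad := by
  induction t with
  | leaf => simp [PTree.dyad]
  | node t₁ t₂ ih₁ ih₂ =>
    exact Finset.mem_union_right _ (Finset.mem_image.mpr ⟨1, ih₂, by norm_num⟩)

lemma dyadList_sorted (t : PTree) : (dyadList t).Pairwise (· < ·) :=
  (Finset.sortedLT_sort _).pairwise

lemma mem_dyadList {t : PTree} {x : ℚ} : x ∈ dyadList t ↔ x ∈ t.dyad :=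
  Finset.mem_sort _

lemma dyadList_head (t : PTree) : ∃ l, dyadList t = 0 :: l := by
  have h0 : (0 : ℚ) ∈ dyadList t := mem_dyadList.mpr (zero_mem_dyad t)
  obtain ⟨a, l, h⟩ := List.exists_cons_of_ne_nil (List.ne_nil_of_mem h0)
  refine ⟨l, ?_⟩
  rw [h] at h0 ⊢
  have hs := dyadList_sorted t
  rw [h, List.pairwise_cons] at hs
  rcases List.mem_cons.mp h0 with rfl | hl
  · rfl
  · have ha : 0 ≤ a := dyad_nonneg (mem_dyadList.mp (by rw [h]; exact List.mem_cons_self (a := a) (l := l)))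
    exact absurd (hs.1 0 hl) (by linarith)

/-- Lexicographic "rel at a position" relation. -/
def LexR (A B : List ℚ) : Prop :=
  ∃ c a b A₁ B₁, a < b ∧ A = c ++ a :: A₁ ∧ B = c ++ b :: B₁

lemma LexR.lex {A B : List ℚ} (h : LexR A B) : List.Lex (· < ·) A B := by
  obtain ⟨c, a, b, A₁, B₁, hab, rfl, rfl⟩ := h
  induction c with
  | nil => exact List.Lex.rel hab
  | cons x c ih => exact List.Lex.cons ih

lemma LexR.append {A B X Y : List ℚ} (h : LexR A B) : LexR (A ++ X) (B ++ Y) := by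
  obtain ⟨c, a, b, A₁, B₁, hab, rfl, rfl⟩ := h
  exact ⟨c, a, b, A₁ ++ X, B₁ ++ Y, hab, by simp, by simp⟩

lemma LexR.prepend {A B : List ℚ} (C : List ℚ) (h : LexR A B) : LexR (C ++ A) (C ++ B) := by
  obtain ⟨c, a, b, A₁, B₁, hab, rfl, rfl⟩ := h
  exact ⟨C ++ c, a, b, A₁, B₁, hab, by simp, by simp⟩

lemma LexR.map {A B : List ℚ} {g : ℚ → ℚ} (hg : StrictMono g) (h : LexR A B) :
    LexR (A.map g) (B.map g) := by
  obtain ⟨c, a, b, A₁, B₁, hab, rfl, rfl⟩ := h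
  exact ⟨c.map g, g a, g b, A₁.map g, B₁.map g, hg hab, by simp, by simp⟩

/-- The key structural lemma. -/
lemma dyadList_node (t₁ t₂ : PTree) :
    dyadList (.node t₁ t₂) =
      (dyadList t₁).map (fun x => x / 2) ++
        (dyadList t₂).tail.map (fun x => 1 / 2 + x / 2) := by
  obtain ⟨l₂, hl₂⟩ := dyadList_head t₂
  have hs₁ := dyadList_sorted t₁
  have hs₂ := dyadList_sorted t₂
  have htail : ∀ x ∈ (dyadList t₂).tail, (0:ℚ) < x := by
    rw [hl₂]; intro x hx
    have := (List.pairwise_cons.mp (hl₂ ▸ hs₂)).1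
    exact this x hx
  -- pairwise < of the RHS
  have hpw : ((dyadList t₁).map (fun x => x / 2) ++
      (dyadList t₂).tail.map (fun x => 1 / 2 + x / 2)).Pairwise (· < ·) := by
    rw [List.pairwise_append]
    refine ⟨hs₁.map _ (fun a b h => by linarith), ?_, ?_⟩
    · have : (dyadList t₂).tail.Pairwise (· < ·) := by
        rw [hl₂]; exact (List.pairwise_cons.mp (hl₂ ▸ hs₂)).2
      exact this.map _ (fun a b h => by linarith)
    · intro x hx y hy
      simp only [List.mem_map] at hx hy
      obtain ⟨a, ha, rfl⟩ := hx
      obtain ⟨b, hb, rfl⟩ := hy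
      have h1 : a ≤ 1 := dyad_le_one (mem_dyadList.mp ha)
      have h2 : 0 < b := htail b hb
      linarith
  refine List.Perm.eq_of_pairwise' (Finset.pairwise_sort _ _) (hpw.imp le_of_lt) ?_
  refine (List.perm_ext_iff_of_nodup (Finset.sort_nodup _ _)
    (hpw.imp ne_of_lt)).mpr ?_
  intro y
  rw [show ((PTree.node t₁ t₂).dyad.sort (· ≤ ·)) = dyadList (.node t₁ t₂) from rfl,
    mem_dyadList]
  simp only [PTree.dyad, Finset.mem_union, Finset.mem_image, List.mem_append, List.mem_map]
  constructor
  · rintro (⟨x, hx, rfl⟩ | ⟨x, hx, rfl⟩)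
    · exact Or.inl ⟨x, mem_dyadList.mpr hx, rfl⟩
    · rw [← mem_dyadList, hl₂] at hx
      rcases List.mem_cons.mp hx with rfl | hx
    -- x = 0 case: 1/2 + 0/2 = 1/2 = 1/2 comes from 1 ∈ dyad t₁
      · exact Or.inl ⟨1, mem_dyadList.mpr (one_mem_dyad t₁), by norm_num⟩
      · exact Or.inr ⟨x, by rw [hl₂, List.tail_cons]; exact hx, rfl⟩
  · rintro (⟨x, hx, rfl⟩ | ⟨x, hx, rfl⟩)
    · exact Or.inl ⟨x, mem_dyadList.mp hx, rfl⟩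
    · refine Or.inr ⟨x, ?_, rfl⟩
      rw [hl₂, List.tail_cons] at hx
      rw [← mem_dyadList, hl₂]
      exact List.mem_cons_of_mem _ hx

lemma dyadList_leaf : dyadList .leaf = [0, 1] := by
  show Finset.sort {0, 1} (· ≤ ·) = [0, 1]
  rw [Finset.sort_insert (r := (· ≤ ·)) (by simp) (by norm_num),
    Finset.sort_singleton]

lemma tlt_lexR {t t' : PTree} (h : TLt t t') : LexR (dyadList t') (dyadList t) := by
  induction h with
  | @leaf t₁ t₂ =>
    rw [dyadList_leaf, dyadList_node]
    obtain ⟨l₁, hl₁⟩ := dyadList_head t₁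
    have h1 : (1:ℚ) ∈ dyadList t₁ := mem_dyadList.mpr (one_mem_dyad t₁)
    obtain ⟨x, r, hr⟩ : ∃ x r, l₁ = x :: r := by
      cases l₁ with
      | nil => rw [hl₁] at h1; simp at h1
      | cons x r => exact ⟨x, r, rfl⟩
    rw [hl₁, hr]
    have hx1 : x ≤ 1 := dyad_le_one (mem_dyadList.mp (by rw [hl₁, hr]; simp))
    exact ⟨[0], x / 2, 1,
      r.map (fun x => x / 2) ++ (dyadList t₂).tail.map (fun x => 1 / 2 + x / 2), [],
      by linarith, by simp, rfl⟩
  | @left t₁ t₁' t₂ t₂' h ih =>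
    rw [dyadList_node, dyadList_node]
    exact (ih.map (fun a b h => by show a / 2 < b / 2; linarith)).append
  | @right t₁ t₂ t₂' h ih =>
    rw [dyadList_node, dyadList_node]
    refine LexR.prepend _ ?_
    obtain ⟨l₂, hl₂⟩ := dyadList_head t₂
    obtain ⟨l₂', hl₂'⟩ := dyadList_head t₂'
    rw [hl₂, hl₂']
    obtain ⟨c, a, b, A₁, B₁, hab, hA, hB⟩ := ih
    rw [hl₂'] at hA; rw [hl₂] at hB
    refine LexR.map (g := fun x => 1/2 + x/2)
      (fun a b h => by show 1/2 + a/2 < 1/2 + b/2; linarith) ?_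
    cases c with
    | nil =>
      simp only [List.nil_append] at hA hB
      injection hA with hA1 _
      injection hB with hB1 _
      rw [← hA1, ← hB1] at hab
      exact absurd hab (lt_irrefl 0)
    | cons x c' =>
      rw [List.cons_append] at hA hB
      injection hA with _ hA2
      injection hB with _ hB2
      exact ⟨c', a, b, A₁, B₁, hab, hA2, hB2⟩

lemma tlt_total : ∀ t t' : PTree, TLt t t' ∨ t = t' ∨ TLt t' t := by
  intro t
  induction t with
  | leaf => intro t'; cases t' with
    | leaf => exact Or.inr (Or.inl rfl)
    | node a b => exact Or.inl TLt.leaf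
  | node t₁ t₂ ih₁ ih₂ =>
    intro t'
    cases t' with
    | leaf => exact Or.inr (Or.inr TLt.leaf)
    | node s₁ s₂ =>
      rcases ih₁ s₁ with h | h | h
      · exact Or.inl (TLt.left h)
      · subst h
        rcases ih₂ s₂ with h | h | h
        · exact Or.inl (TLt.right h)
        · exact Or.inr (Or.inl (by rw [h]))
        · exact Or.inr (Or.inr (TLt.right h))
      · exact Or.inr (Or.inr (TLt.left h))

/-- The recursive tree order coincides with reverse lexicographic comparison of the
increasing enumerations of the sets `Dyad(t)`: `t ≺ t'` iff the enumeration of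
`Dyad(t)` is lexicographically greater than that of `Dyad(t')`. -/
theorem tlt_iff_dyad_lex (t t' : PTree) :
    TLt t t' ↔ List.Lex (· < ·) (dyadList t') (dyadList t) := by
  constructor
  · exact fun h => (tlt_lexR h).lex
  · intro h
    rcases tlt_total t t' with h1 | rfl | h1
    · exact h1
    · exact absurd h (irrefl_of (List.Lex (· < ·)) _)
    · exact absurd ((tlt_lexR h1).lex) (asymm h)
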